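/- The two visible triple-phase events of the tropical 2-soliton solution are spatially separated: x_{1\bar1,\bar11,11} − x_{\bar1\bar1,1\bar1,\bar11} = ℓ (p_1² + p_1 p_2 + p_2²)/(p_1 p_2 (p_1+p_2)) > 0, where x denotes the x-coordinate of the respective triple coincidence. -/

import Mathlib

open Real

noncomputable def θ (p x t : ℝ) : ℝ := p * (x + p^2 * t)

noncomputable def Θmm (p₁ p₂ x t : ℝ) : ℝ := -θ p₁ x t - θ p₂ x t + Real.log (p₂ - p₁)
noncomputable def Θpm (p₁ p₂ x t : ℝ) : ℝ := θ p₁ x t - θ p₂ x t + Real.log (p₁ + p₂)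
noncomputable def Θmp (p₁ p₂ x t : ℝ) : ℝ := -θ p₁ x t + θ p₂ x t + Real.log (p₁ + p₂)
noncomputable def Θpp (p₁ p₂ x t : ℝ) : ℝ := θ p₁ x t + θ p₂ x t + Real.log (p₂ - p₁)

noncomputable def ℓ (p₁ p₂ : ℝ) : ℝ := Real.log ((p₂ + p₁) / (p₂ - p₁))

/-! At both visible triple points the two phases coincide, θ₁ = θ₂ = ±ℓ/2, so each event is the
solution of the linear system `p x + p³ t = ±ℓ/2` (p = p₁, p₂); eliminating `t` gives
`x = ±(ℓ/2)(p₁² + p₁p₂ + p₂²)/(p₁p₂(p₁ + p₂))`, and the two events are `ℓ` times this factor apart. -/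

lemma ℓ_eq_log_sub_log {p₁ p₂ : ℝ} (h1 : 0 < p₁) (h12 : p₁ < p₂) :
    ℓ p₁ p₂ = log (p₁ + p₂) - log (p₂ - p₁) := by
  rw [ℓ, log_div (by linarith) (by linarith), add_comm p₂ p₁]

lemma ℓ_pos {p₁ p₂ : ℝ} (h1 : 0 < p₁) (h12 : p₁ < p₂) : 0 < ℓ p₁ p₂ :=
  log_pos <| (one_lt_div (by linarith)).2 (by linarith)

lemma θ_eq_θ_of_Θpm_eq_Θmp {p₁ p₂ x t : ℝ} (h : Θpm p₁ p₂ x t = Θmp p₁ p₂ x t) :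
    θ p₁ x t = θ p₂ x t := by
  simp only [Θpm, Θmp] at h
  linarith

lemma two_mul_θ_of_Θmp_eq_Θpp {p₁ p₂ x t : ℝ} (h : Θmp p₁ p₂ x t = Θpp p₁ p₂ x t) :
    2 * θ p₁ x t = log (p₁ + p₂) - log (p₂ - p₁) := by
  simp only [Θmp, Θpp] at h
  linarith

lemma two_mul_θ_of_Θmm_eq_Θpm {p₁ p₂ x t : ℝ} (h : Θmm p₁ p₂ x t = Θpm p₁ p₂ x t) :
    2 * θ p₁ x t = -(log (p₁ + p₂) - log (p₂ - p₁)) := by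
  simp only [Θmm, Θpm] at h
  linarith

lemma eq_of_θ_eq_of_θ_eq {p₁ p₂ x t c : ℝ} (hp : p₁ * p₂ * (p₁ + p₂) ≠ 0) (hne : p₁ ≠ p₂)
    (h₁ : θ p₁ x t = c) (h₂ : θ p₂ x t = c) :
    x = c * (p₁^2 + p₁*p₂ + p₂^2) / (p₁*p₂*(p₁ + p₂)) := by
  rw [eq_div_iff hp]
  refine mul_right_cancel₀ (sub_ne_zero.2 hne.symm) ?_
  simp only [θ] at h₁ h₂
  linear_combination p₂^3 * h₁ - p₁^3 * h₂

theorem visible_triple_events_spatial_separation (p₁ p₂ : ℝ) (h1 : 0 < p₁) (h12 : p₁ < p₂) :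
    ∀ x₁ t₁ x₂ t₂ : ℝ,
      (Θpm p₁ p₂ x₁ t₁ = Θmp p₁ p₂ x₁ t₁ ∧ Θmp p₁ p₂ x₁ t₁ = Θpp p₁ p₂ x₁ t₁) →
      (Θmm p₁ p₂ x₂ t₂ = Θpm p₁ p₂ x₂ t₂ ∧ Θpm p₁ p₂ x₂ t₂ = Θmp p₁ p₂ x₂ t₂) →
      x₁ - x₂ = ℓ p₁ p₂ * (p₁^2 + p₁*p₂ + p₂^2) / (p₁*p₂*(p₁ + p₂))
      ∧ 0 < x₁ - x₂ := by
  rintro x₁ t₁ x₂ t₂ ⟨hA₁, hA₂⟩ ⟨hB₁, hB₂⟩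
  have hp₂ : 0 < p₂ := h1.trans h12
  have hp : p₁ * p₂ * (p₁ + p₂) ≠ 0 := by positivity
  have hℓ := ℓ_eq_log_sub_log h1 h12
  have hθA := θ_eq_θ_of_Θpm_eq_Θmp hA₁
  have hθB := θ_eq_θ_of_Θpm_eq_Θmp hB₂
  have hA : θ p₁ x₁ t₁ = ℓ p₁ p₂ / 2 := by linarith [two_mul_θ_of_Θmp_eq_Θpp hA₂]
  have hB : θ p₁ x₂ t₂ = -(ℓ p₁ p₂ / 2) := by linarith [two_mul_θ_of_Θmm_eq_Θpm hB₁]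
  have hx₁ := eq_of_θ_eq_of_θ_eq hp h12.ne hA (hθA ▸ hA)
  have hx₂ := eq_of_θ_eq_of_θ_eq hp h12.ne hB (hθB ▸ hB)
  have hsep : x₁ - x₂ = ℓ p₁ p₂ * (p₁^2 + p₁*p₂ + p₂^2) / (p₁*p₂*(p₁ + p₂)) := by
    rw [hx₁, hx₂]
    ring
  have hℓ_pos := ℓ_pos h1 h12
  exact ⟨hsep, hsep ▸ by positivity⟩
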